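/- arXiv:1903.08216 — 6 statements merged into one kernel-verified Lean document; each statement's English description precedes it below -/
import Mathlib

section
/- Let φ: ℝ → ℝ be compactly supported, twice continuously differentiable, satisfy Σ_{j∈ℤ} j^m φ(t − j) = t^m for all t ∈ ℝ and m = 0, 1, 2, and satisfy ∫_ℝ φ(t) dt = 1. Define ψ(q, s) := Σ_{j∈ℤ} max(j − q + s, 0) · φ''(q − j). Then there exists c > 0 such that −∫_h^∞ ∫_0^1 ψ(t, s) dt ds = 0 for every h > c, and −∫_h^∞ ∫_0^1 ψ(t, s) dt ds = −1 for every h < −c. -/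
/-!
Differentiating the reproduction identities `∑ j^m φ(t - j) = t^m` twice (the sums are locally
finite since `φ` has compact support) gives `∑ p(j) φ''(t - j) = p''` for every polynomial `p` of
degree at most two. If `φ` lives in `[-R, R]`, only the `j` with `|t - j| ≤ R` contribute to
`ψ(t, s)`. For `s ≤ -R` all the weights `max (j - t + s) 0` vanish; for `s ≥ R` they are the linear
polynomial `j - t + s`, so `ψ(t, s) = 0`; and integrating over `s ∈ [-R, R]` turns them into
`(j - t + R)² / 2`, whose second derivative is `1`. Fubini then gives both values.
-/

open MeasureTheory

/-- ψ(q, s) := Σ_{j∈ℤ} max(j − q + s, 0) · φ''(q − j). -/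
noncomputable def psi (φ : ℝ → ℝ) (q s : ℝ) : ℝ :=
  ∑' j : ℤ, max ((j : ℝ) - q + s) 0 * deriv (deriv φ) (q - (j : ℝ))

open Set Topology

theorem HasCompactSupport.exists_finset_sub_intCast_notMem_tsupport {M : Type*} [Zero M]
    {f : ℝ → M} (hf : HasCompactSupport f) {K : Set ℝ} (hK : IsCompact K) :
    ∃ J : Finset ℤ, ∀ t ∈ K, ∀ j ∉ J, t - j ∉ tsupport f := by
  have hfin := tendsto_cofinite_cocompact_iff.mp Int.tendsto_coe_cofinite _
    ((hK.prod hf).image continuous_sub)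
  refine ⟨hfin.toFinset, fun t ht j hj hmem => hj ?_⟩
  rw [Finite.mem_toFinset]
  exact ⟨(t, t - j), ⟨ht, hmem⟩, sub_sub_cancel t j⟩

section Translates

variable {f : ℝ → ℝ}

theorem tsum_mul_sub_eq_sum {J : Finset ℤ} {t : ℝ} (hJ : ∀ j ∉ J, t - j ∉ tsupport f)
    (g : ℤ → ℝ) : ∑' j : ℤ, g j * f (t - j) = ∑ j ∈ J, g j * f (t - j) :=
  tsum_eq_sum fun j hj => by rw [image_eq_zero_of_notMem_tsupport (hJ j hj), mul_zero]

theorem HasCompactSupport.summable_mul_sub (hf : HasCompactSupport f) (g : ℤ → ℝ) (t : ℝ) :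
    Summable fun j : ℤ => g j * f (t - j) := by
  obtain ⟨J, hJ⟩ := hf.exists_finset_sub_intCast_notMem_tsupport isCompact_singleton
  exact summable_of_ne_finset_zero fun j hj => by
    rw [image_eq_zero_of_notMem_tsupport (hJ t rfl j hj), mul_zero]

theorem HasCompactSupport.continuous_tsum_mul_sub {X : Type*} [TopologicalSpace X]
    (hf : HasCompactSupport f) (hfc : Continuous f) {p : X → ℝ} (hp : Continuous p)
    {g : ℤ → X → ℝ} (hg : ∀ j, Continuous (g j)) :
    Continuous fun x => ∑' j : ℤ, g j x * f (p x - j) := by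
  refine continuous_iff_continuousAt.2 fun x₀ => ?_
  obtain ⟨J, hJ⟩ :=
    hf.exists_finset_sub_intCast_notMem_tsupport (isCompact_closedBall (p x₀) 1)
  have hnear : ∀ᶠ x in 𝓝 x₀, p x ∈ Metric.closedBall (p x₀) 1 :=
    hp.continuousAt.eventually_mem (Metric.closedBall_mem_nhds _ one_pos)
  refine ContinuousAt.congr ?_ (hnear.mono fun x hx => (tsum_mul_sub_eq_sum (hJ _ hx) _).symm)
  exact (continuous_finsetSum J fun j _ =>
    (hg j).mul (hfc.comp (hp.sub continuous_const))).continuousAt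

theorem HasCompactSupport.hasDerivAt_tsum_mul_sub (hf : HasCompactSupport f)
    (hd : Differentiable ℝ f) (g : ℤ → ℝ) (t : ℝ) :
    HasDerivAt (fun x => ∑' j : ℤ, g j * f (x - j)) (∑' j : ℤ, g j * deriv f (t - j)) t := by
  obtain ⟨J, hJ⟩ := hf.exists_finset_sub_intCast_notMem_tsupport (isCompact_closedBall t 1)
  have hsum : HasDerivAt (fun x => ∑ j ∈ J, g j * f (x - j))
      (∑ j ∈ J, g j * deriv f (t - j)) t :=
    HasDerivAt.fun_sum fun j _ => ((hd _).hasDerivAt.comp_sub_const t j).const_mul (g j)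
  rw [tsum_mul_sub_eq_sum (fun j hj => notMem_subset tsupport_deriv_subset
    (hJ t (Metric.mem_closedBall_self zero_le_one) j hj))]
  refine hsum.congr_of_eventuallyEq ?_
  filter_upwards [Metric.closedBall_mem_nhds t one_pos] with x hx
  exact tsum_mul_sub_eq_sum (hJ x hx) g

theorem HasCompactSupport.deriv_tsum_mul_sub (hf : HasCompactSupport f)
    (hd : Differentiable ℝ f) (g : ℤ → ℝ) :
    deriv (fun x => ∑' j : ℤ, g j * f (x - j)) = fun t => ∑' j : ℤ, g j * deriv f (t - j) :=
  funext fun t => (hf.hasDerivAt_tsum_mul_sub hd g t).deriv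

end Translates

section PolynomialReproduction

variable {φ : ℝ → ℝ} (hsupp : HasCompactSupport φ)
  (hrepr : ∀ m : ℕ, m ≤ 2 → ∀ t : ℝ, ∑' j : ℤ, (j : ℝ) ^ m * φ (t - (j : ℝ)) = t ^ m)
include hsupp hrepr

theorem tsum_quadratic_mul_sub (a b c t : ℝ) :
    ∑' j : ℤ, (a * j ^ 2 + b * j + c) * φ (t - j) = a * t ^ 2 + b * t + c := by
  have h2 := hrepr 2 le_rfl t
  have h1 : ∑' j : ℤ, (j : ℝ) * φ (t - j) = t := by simpa using hrepr 1 (by norm_num) t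
  have h0 : ∑' j : ℤ, φ (t - j) = 1 := by simpa using hrepr 0 (by norm_num) t
  have hs2 := hsupp.summable_mul_sub (fun j => (j : ℝ) ^ 2) t
  have hs1 := hsupp.summable_mul_sub (fun j => (j : ℝ)) t
  have hs0 : Summable fun j : ℤ => φ (t - j) := by simpa using hsupp.summable_mul_sub 1 t
  calc ∑' j : ℤ, (a * j ^ 2 + b * j + c) * φ (t - j)
      = ∑' j : ℤ, (a * ((j : ℝ) ^ 2 * φ (t - j)) + b * ((j : ℝ) * φ (t - j)) + c * φ (t - j)) :=
        tsum_congr fun j => by ring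
    _ = a * t ^ 2 + b * t + c := by
        rw [Summable.tsum_add ((hs2.mul_left a).add (hs1.mul_left b)) (hs0.mul_left c),
          Summable.tsum_add (hs2.mul_left a) (hs1.mul_left b), tsum_mul_left, tsum_mul_left,
          tsum_mul_left, h2, h1, h0, mul_one]

theorem tsum_quadratic_mul_deriv_deriv_sub (hsmooth : ContDiff ℝ 2 φ) (a b c t : ℝ) :
    ∑' j : ℤ, (a * j ^ 2 + b * j + c) * deriv (deriv φ) (t - j) = 2 * a := by
  have hd : Differentiable ℝ φ := hsmooth.differentiable two_ne_zero
  have hd' : Differentiable ℝ (deriv φ) :=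
    (hsmooth.iterate_deriv' 1 1).differentiable one_ne_zero
  have hquad : ∀ x, HasDerivAt (fun x => a * x ^ 2 + b * x + c) (2 * a * x + b) x := by
    intro x
    refine ((((hasDerivAt_pow 2 x).const_mul a).fun_add
      ((hasDerivAt_id' x).const_mul b)).add_const c).congr_deriv ?_
    simp only [Nat.cast_ofNat, mul_one]; ring
  have hlin : ∀ x, HasDerivAt (fun x => 2 * a * x + b) (2 * a) x := fun x => by
    simpa using ((hasDerivAt_id x).const_mul (2 * a)).add_const b
  calc ∑' j : ℤ, (a * j ^ 2 + b * j + c) * deriv (deriv φ) (t - j)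
      = deriv (deriv fun x => ∑' j : ℤ, (a * j ^ 2 + b * j + c) * φ (x - j)) t := by
        rw [hsupp.deriv_tsum_mul_sub hd, hsupp.deriv.deriv_tsum_mul_sub hd']
    _ = deriv (deriv fun x => a * x ^ 2 + b * x + c) t := by
        simp only [tsum_quadratic_mul_sub hsupp hrepr]
    _ = 2 * a := by rw [funext fun x => (hquad x).deriv, (hlin t).deriv]

end PolynomialReproduction

theorem integral_max_add_zero {a R : ℝ} (ha : |a| ≤ R) :
    ∫ s in -R..R, max (a + s) 0 = (a + R) ^ 2 / 2 := by
  obtain ⟨hlo, hhi⟩ := abs_le.mp ha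
  have hcont : Continuous fun s : ℝ => max (a + s) 0 := by fun_prop
  rw [← intervalIntegral.integral_add_adjacent_intervals (hcont.intervalIntegrable (-R) (-a))
    (hcont.intervalIntegrable (-a) R)]
  have hneg : ∫ s in -R..-a, max (a + s) 0 = 0 := by
    refine (intervalIntegral.integral_congr fun s hs => ?_).trans intervalIntegral.integral_zero
    rw [uIcc_of_le (by linarith)] at hs
    exact max_eq_right (by linarith [hs.2])
  have hpos : ∫ s in -a..R, max (a + s) 0 = ∫ s in -a..R, (a + s) := by
    refine intervalIntegral.integral_congr fun s hs => ?_
    rw [uIcc_of_le (by linarith)] at hs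
    exact max_eq_left (by linarith [hs.1])
  rw [hneg, hpos, intervalIntegral.integral_comp_add_left (fun x => x), integral_id]
  ring

section Psi

variable {φ : ℝ → ℝ} {R : ℝ}

theorem deriv_deriv_eq_zero_of_notMem_tsupport {x : ℝ} (hx : x ∉ tsupport φ) :
    deriv (deriv φ) x = 0 :=
  image_eq_zero_of_notMem_tsupport
    (notMem_subset (tsupport_deriv_subset.trans tsupport_deriv_subset) hx)

theorem psi_eq_zero_of_le_neg (hR : tsupport φ ⊆ Icc (-R) R) {s : ℝ} (hs : s ≤ -R) (t : ℝ) :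
    psi φ t s = 0 := by
  refine (tsum_congr fun j => ?_).trans tsum_zero
  by_cases hj : t - j ∈ tsupport φ
  · rw [max_eq_right (by linarith [(hR hj).1]), zero_mul]
  · rw [deriv_deriv_eq_zero_of_notMem_tsupport hj, mul_zero]

variable (hsupp : HasCompactSupport φ) (hsmooth : ContDiff ℝ 2 φ)
include hsupp hsmooth

theorem continuous_psi : Continuous fun p : ℝ × ℝ => psi φ p.1 p.2 :=
  hsupp.deriv.deriv.continuous_tsum_mul_sub ((hsmooth.iterate_deriv' 0 2).continuous)
    continuous_fst fun j => by fun_prop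

variable
  (hrepr : ∀ m : ℕ, m ≤ 2 → ∀ t : ℝ, ∑' j : ℤ, (j : ℝ) ^ m * φ (t - (j : ℝ)) = t ^ m)
include hrepr

theorem psi_eq_zero_of_le (hR : tsupport φ ⊆ Icc (-R) R) {s : ℝ} (hs : R ≤ s) (t : ℝ) :
    psi φ t s = 0 :=
  calc psi φ t s = ∑' j : ℤ, (0 * j ^ 2 + 1 * j + (s - t)) * deriv (deriv φ) (t - j) := by
        refine tsum_congr fun j => ?_
        by_cases hj : t - j ∈ tsupport φ
        · rw [max_eq_left (by linarith [(hR hj).2])]; ring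
        · rw [deriv_deriv_eq_zero_of_notMem_tsupport hj, mul_zero, mul_zero]
    _ = 0 := by rw [tsum_quadratic_mul_deriv_deriv_sub hsupp hrepr hsmooth]; ring

theorem integral_psi (hR : tsupport φ ⊆ Icc (-R) R) (t : ℝ) :
    ∫ s in -R..R, psi φ t s = 1 := by
  obtain ⟨J, hJ⟩ := hsupp.exists_finset_sub_intCast_notMem_tsupport isCompact_singleton
  have hJ' : ∀ j ∉ J, t - j ∉ tsupport (deriv (deriv φ)) := fun j hj =>
    notMem_subset (tsupport_deriv_subset.trans tsupport_deriv_subset) (hJ t rfl j hj)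
  calc ∫ s in -R..R, psi φ t s
      = ∫ s in -R..R, ∑ j ∈ J, max ((j : ℝ) - t + s) 0 * deriv (deriv φ) (t - j) :=
        intervalIntegral.integral_congr fun s _ => tsum_mul_sub_eq_sum hJ' _
    _ = ∑ j ∈ J, ∫ s in -R..R, max ((j : ℝ) - t + s) 0 * deriv (deriv φ) (t - j) :=
        intervalIntegral.integral_finsetSum fun j _ => by
          apply Continuous.intervalIntegrable; fun_prop
    _ = ∑ j ∈ J, (1 / 2 * (j : ℝ) ^ 2 + (R - t) * j + (R - t) ^ 2 / 2) *
          deriv (deriv φ) (t - j) := by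
        refine Finset.sum_congr rfl fun j _ => ?_
        rw [intervalIntegral.integral_mul_const]
        by_cases hj : t - j ∈ tsupport φ
        · have hjt : |(j : ℝ) - t| ≤ R := by
            rw [abs_sub_comm]; exact abs_le.mpr (hR hj)
          rw [integral_max_add_zero hjt]; ring
        · rw [deriv_deriv_eq_zero_of_notMem_tsupport hj, mul_zero, mul_zero]
    _ = 1 := by
        rw [← tsum_mul_sub_eq_sum hJ', tsum_quadratic_mul_deriv_deriv_sub hsupp hrepr hsmooth]
        norm_num

end Psi

theorem setIntegral_Ioi_eq_intervalIntegral {E : Type*} [NormedAddCommGroup E] [NormedSpace ℝ E]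
    {F : ℝ → E} {a b h : ℝ} (hF : ∀ s ∉ Ioc a b, F s = 0) (hh : h ≤ a) (hab : a ≤ b) :
    ∫ s in Ioi h, F s = ∫ s in a..b, F s := by
  rw [intervalIntegral.integral_of_le hab, setIntegral_eq_integral_of_forall_compl_eq_zero hF,
    setIntegral_eq_integral_of_forall_compl_eq_zero (s := Ioi h)
      fun s hs => hF s fun hs' => hs (hh.trans_lt hs'.1)]

theorem stmt0_general (φ : ℝ → ℝ)
    (hsupp : HasCompactSupport φ)
    (hsmooth : ContDiff ℝ 2 φ)
    (hA1 : ∀ m : ℕ, m ≤ 2 → ∀ t : ℝ,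
      ∑' j : ℤ, (j : ℝ) ^ m * φ (t - (j : ℝ)) = t ^ m) :
    ∃ c : ℝ, 0 < c ∧
      (∀ h : ℝ, c < h →
        -∫ s in Set.Ioi h, ∫ t in (0:ℝ)..1, psi φ t s = (0 : ℝ)) ∧
      (∀ h : ℝ, h < -c →
        -∫ s in Set.Ioi h, ∫ t in (0:ℝ)..1, psi φ t s = (-1 : ℝ)) := by
  obtain ⟨R, hR0, hR⟩ := hsupp.isCompact.isBounded.subset_closedBall_lt 0 (0 : ℝ)
  rw [Real.closedBall_eq_Icc, zero_sub, zero_add] at hR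
  have hvanish : ∀ s ∉ Ioc (-R) R, ∫ t in (0:ℝ)..1, psi φ t s = 0 := by
    intro s hs
    rcases le_or_gt s (-R) with hs' | hs'
    · simp only [psi_eq_zero_of_le_neg hR hs', intervalIntegral.integral_zero]
    · simp only [psi_eq_zero_of_le hsupp hsmooth hA1 hR (le_of_not_gt fun hlt => hs ⟨hs', hlt.le⟩),
        intervalIntegral.integral_zero]
  refine ⟨R, hR0, fun h hh => ?_, fun h hh => ?_⟩
  · rw [setIntegral_eq_zero_of_forall_eq_zero fun s hs => hvanish s fun hs' => ?_, neg_zero]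
    linarith [hs'.2, mem_Ioi.mp hs]
  · have hint : IntegrableOn (Function.uncurry fun s t => psi φ t s) (uIoc (-R) R ×ˢ uIoc 0 1) :=
      ((continuous_psi hsupp hsmooth).comp continuous_swap).continuousOn.integrableOn_compact
        (isCompact_uIcc.prod isCompact_uIcc) |>.mono_set
        (prod_mono uIoc_subset_uIcc uIoc_subset_uIcc)
    rw [setIntegral_Ioi_eq_intervalIntegral hvanish hh.le (by linarith),
      intervalIntegral_intervalIntegral_swap hint]
    simp [integral_psi hsupp hsmooth hA1 hR]

theorem stmt0 (φ : ℝ → ℝ)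
    (hsupp : HasCompactSupport φ)
    (hsmooth : ContDiff ℝ 2 φ)
    (hA1 : ∀ m : ℕ, m ≤ 2 → ∀ t : ℝ,
      ∑' j : ℤ, (j : ℝ) ^ m * φ (t - (j : ℝ)) = t ^ m)
    (hA5 : ∫ t : ℝ, φ t = 1) :
    ∃ c : ℝ, 0 < c ∧
      (∀ h : ℝ, c < h →
        -∫ s in Set.Ioi h, ∫ t in (0:ℝ)..1, psi φ t s = (0 : ℝ)) ∧
      (∀ h : ℝ, h < -c →
        -∫ s in Set.Ioi h, ∫ t in (0:ℝ)..1, psi φ t s = (-1 : ℝ)) :=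
  stmt0_general φ hsupp hsmooth hA1
end

section
/- Let φ: ℝ → ℝ be compactly supported and twice continuously differentiable. Define ψ(q, s) := Σ_{j∈ℤ} max(j − q + s, 0) · φ''(q − j). Then for every s ∈ ℝ, ∫_0^1 ψ(t, s) dt = φ(s). -/
/-!
Writing `g u = max (s - u) 0 * φ'' u`, the function `t ↦ ψ(t, s)` is the `ℤ`-periodization
`∑ₙ g (t + n)` of `g`, so its integral over a period is `∫ g` over the whole line. Since `φ`
and `φ'` vanish at any `a` left of the support of `φ`, `∫ g = ∫_a^s (s - u) φ'' u du` is the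
integral remainder of the first-order Taylor expansion of `φ` at `a`, which is `φ s`.
-/

open MeasureTheory

open Set
open scoped Pointwise

theorem HasCompactSupport.exists_finset_comp_add_int_eq_zero {E : Type*} [Zero E]
    {g : ℝ → E} (hg : HasCompactSupport g) (a b : ℝ) :
    ∃ S : Finset ℤ, ∀ n ∉ S, ∀ t ∈ Icc a b, g (t + n) = 0 := by
  have hK : IsCompact (tsupport g + Icc (-b) (-a)) := hg.isCompact.add isCompact_Icc
  have hfin := Filter.eventually_cofinite.mp
    (Int.tendsto_coe_cofinite.eventually hK.compl_mem_cocompact)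
  refine ⟨hfin.toFinset, fun n hn t ht => image_eq_zero_of_notMem_tsupport fun hmem => ?_⟩
  refine hn (hfin.mem_toFinset.mpr (not_not.mpr ?_))
  simpa using add_mem_add hmem (show -t ∈ Icc (-b) (-a) from ⟨neg_le_neg ht.2, neg_le_neg ht.1⟩)

theorem intervalIntegral_tsum_comp_add_int {E : Type*} [NormedAddCommGroup E] [NormedSpace ℝ E]
    {g : ℝ → E} (hg : Continuous g) (hgc : HasCompactSupport g) :
    ∫ t in (0 : ℝ)..1, ∑' n : ℤ, g (t + n) = ∫ t, g t := by
  obtain ⟨S, hS⟩ := hgc.exists_finset_comp_add_int_eq_zero 0 1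
  have hsum : ∀ t ∈ uIcc (0 : ℝ) 1, ∑' n : ℤ, g (t + n) = ∑ n ∈ S, g (t + n) := fun t ht =>
    tsum_eq_sum fun n hn => hS n hn t (by simpa using ht)
  have hint : ∀ n ∉ S, ∫ t in (0 : ℝ)..1, g (t + n) = 0 := fun n hn => by
    rw [intervalIntegral.integral_congr (g := 0) fun t ht => hS n hn t (by simpa using ht)]
    exact intervalIntegral.integral_zero
  calc ∫ t in (0 : ℝ)..1, ∑' n : ℤ, g (t + n)
      = ∑ n ∈ S, ∫ t in (0 : ℝ)..1, g (t + n) := by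
        rw [intervalIntegral.integral_congr hsum, intervalIntegral.integral_finsetSum]
        exact fun n _ => (hg.comp (continuous_add_const _)).intervalIntegrable 0 1
    _ = ∑' n : ℤ, ∫ t in (0 : ℝ)..1, g (t + n) := (tsum_eq_sum hint).symm
    _ = ∫ t, g t :=
        (hg.integrable_of_hasCompactSupport hgc).hasSum_intervalIntegral_comp_add_int.tsum_eq

theorem integral_sub_mul_deriv_deriv {f : ℝ → ℝ} (hf : ContDiff ℝ 2 f) (a s : ℝ) :
    ∫ u in a..s, (s - u) * deriv (deriv f) u = f s - f a - (s - a) * deriv f a := by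
  have hf' : ContDiff ℝ 1 (deriv f) := hf.deriv' (n := 1)
  rw [intervalIntegral.integral_mul_deriv_eq_deriv_mul (u := fun u => s - u)
      (fun u _ => (hasDerivAt_id u).const_sub s)
      (fun u _ => (hf'.differentiable one_ne_zero u).hasDerivAt)
      intervalIntegrable_const ((hf'.continuous_deriv le_rfl).intervalIntegrable a s),
    intervalIntegral.integral_const_mul,
    intervalIntegral.integral_deriv_eq_sub (fun u _ => hf.differentiable two_ne_zero u)
      ((hf.continuous_deriv one_le_two).intervalIntegrable a s)]
  ring

theorem HasCompactSupport.integral_max_sub_mul_deriv_deriv {f : ℝ → ℝ} (hf : ContDiff ℝ 2 f)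
    (hfc : HasCompactSupport f) (s : ℝ) :
    ∫ u, max (s - u) 0 * deriv (deriv f) u = f s := by
  obtain ⟨b, hb⟩ := hfc.isCompact.bddBelow
  set a := min (b - 1) (s - 1)
  have has : a < s := by simp [a]
  have hvanish : ∀ u ≤ a, u ∉ tsupport f := fun u hu hmem => by
    linarith [hb hmem, min_le_left (b - 1) (s - 1)]
  have hsupp : Function.support (fun u => max (s - u) 0 * deriv (deriv f) u) ⊆ Ioc a s := by
    intro u hu
    refine ⟨lt_of_not_ge fun hua => hu ?_, le_of_not_gt fun hsu => hu ?_⟩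
    · simp [image_eq_zero_of_notMem_tsupport
        (fun h => hvanish u hua (tsupport_deriv_subset (tsupport_deriv_subset h)))]
    · simp [max_eq_right (by linarith : s - u ≤ 0)]
  rw [← intervalIntegral.integral_eq_integral_of_support_subset hsupp,
    intervalIntegral.integral_congr (g := fun u => (s - u) * deriv (deriv f) u)
      fun u hu => by
        rw [uIcc_of_le has.le] at hu
        simp only [max_eq_left (sub_nonneg.mpr hu.2)],
    integral_sub_mul_deriv_deriv hf,
    image_eq_zero_of_notMem_tsupport (hvanish a le_rfl),
    image_eq_zero_of_notMem_tsupport fun h => hvanish a le_rfl (tsupport_deriv_subset h)]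
  ring

theorem psi_eq_tsum_comp_add_int (φ : ℝ → ℝ) (t s : ℝ) :
    psi φ t s = ∑' n : ℤ, max (s - (t + n)) 0 * deriv (deriv φ) (t + n) := by
  rw [psi, ← (Equiv.neg ℤ).tsum_eq]
  congr 1 with n
  simp only [Equiv.neg_apply, Int.cast_neg]
  ring_nf

theorem stmt1 (φ : ℝ → ℝ)
    (hsupp : HasCompactSupport φ)
    (hsmooth : ContDiff ℝ 2 φ) :
    ∀ s : ℝ, ∫ t in (0:ℝ)..1, psi φ t s = φ s := by
  intro s
  have hcont : Continuous fun u => max (s - u) 0 * deriv (deriv φ) u :=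
    (continuous_const.sub continuous_id).max continuous_const |>.mul
      ((hsmooth.deriv' (n := 1)).continuous_deriv le_rfl)
  have hcpt : HasCompactSupport fun u => max (s - u) 0 * deriv (deriv φ) u :=
    hsupp.deriv.deriv.mul_left
  simp_rw [psi_eq_tsum_comp_add_int]
  rw [intervalIntegral_tsum_comp_add_int hcont hcpt,
    hsupp.integral_max_sub_mul_deriv_deriv hsmooth]
end

section
/- Let φ: ℝ → ℝ be compactly supported, twice continuously differentiable, and satisfy Σ_{j∈ℤ} j^m φ(t − j) = t^m for all t ∈ ℝ and m = 0, 1, 2. Define ψ(q, s) := Σ_{j∈ℤ} max(j − q + s, 0) · φ''(q − j). Then there exists c > 0 such that ψ(q, s) = 0 for all q ∈ ℝ whenever |s| ≥ c. -/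
open MeasureTheory

/-! Let `φ''` be supported in `[-r, r]`. For `s < -r` every ramp `max (j - q + s) 0` vanishes
where `φ''(q - j) ≠ 0`, while for `s > r` it equals `j - q + s` there, so `ψ(q, s)` is a
combination of the moments `∑ φ''(q - j)` and `∑ j φ''(q - j)`. These vanish: they are the
second derivatives of the reproduction identities for `m = 0, 1`, which may be differentiated
termwise because near any point only finitely many translates `φ(· - j)` are nonzero. -/

open Filter Topology Metric Pointwise

namespace HasCompactSupport

variable {g : ℝ → ℝ}

lemma exists_finset_eventually_shift_eq_zero (hg : HasCompactSupport g) (t : ℝ) :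
    ∃ F : Finset ℤ, ∀ᶠ u in 𝓝 t, ∀ j ∉ F, g (u - j) = 0 := by
  have hK : IsCompact (closedBall t 1 + -tsupport g) :=
    (isCompact_closedBall t 1).add hg.isCompact.neg
  have hfin : {j : ℤ | (j : ℝ) ∈ closedBall t 1 + -tsupport g}.Finite := by
    simpa using
      eventually_cofinite.mp (Int.tendsto_coe_cofinite.eventually hK.compl_mem_cocompact)
  refine ⟨hfin.toFinset, eventually_of_mem (closedBall_mem_nhds t one_pos) fun u hu j hj => ?_⟩
  by_contra hne
  refine hj (hfin.mem_toFinset.mpr ?_)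
  have hmem : u + -(u - j) ∈ closedBall t 1 + -tsupport g :=
    Set.add_mem_add hu (Set.neg_mem_neg.mpr (subset_tsupport g hne))
  simpa using hmem

lemma summable_mul_shift (hg : HasCompactSupport g) (c : ℤ → ℝ) (t : ℝ) :
    Summable fun j : ℤ => c j * g (t - j) := by
  obtain ⟨F, hF⟩ := hg.exists_finset_eventually_shift_eq_zero t
  exact summable_of_ne_finset_zero (s := F) fun j hj => by simp [hF.self_of_nhds j hj]

lemma hasDerivAt_tsum_mul_shift (hg : HasCompactSupport g) (hd : Differentiable ℝ g)
    (c : ℤ → ℝ) (t : ℝ) :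
    HasDerivAt (fun u => ∑' j : ℤ, c j * g (u - j)) (∑' j : ℤ, c j * deriv g (t - j)) t := by
  obtain ⟨F, hF⟩ := hg.exists_finset_eventually_shift_eq_zero t
  have hloc : (fun u => ∑' j : ℤ, c j * g (u - j)) =ᶠ[𝓝 t] fun u => ∑ j ∈ F, c j * g (u - j) :=
    hF.mono fun u hu => tsum_eq_sum fun j hj => by simp [hu j hj]
  have hderiv : ∀ j ∉ F, deriv g (t - j) = 0 := by
    intro j hj
    have hzero : (fun u => g (u - j)) =ᶠ[𝓝 t] fun _ => 0 := hF.mono fun u hu => hu j hj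
    rw [← deriv_comp_sub_const, hzero.deriv_eq, deriv_const]
  rw [tsum_eq_sum fun j hj => by simp [hderiv j hj]]
  refine HasDerivAt.congr_of_eventuallyEq ?_ hloc
  exact HasDerivAt.fun_sum fun j _ => ((hd _).hasDerivAt.comp_sub_const t j).const_mul (c j)

lemma deriv_tsum_mul_shift (hg : HasCompactSupport g) (hd : Differentiable ℝ g) (c : ℤ → ℝ) :
    deriv (fun u => ∑' j : ℤ, c j * g (u - j)) = fun t => ∑' j : ℤ, c j * deriv g (t - j) :=
  funext fun t => (hg.hasDerivAt_tsum_mul_shift hd c t).deriv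

end HasCompactSupport

lemma tsum_pow_mul_deriv_deriv_shift_eq_zero {φ : ℝ → ℝ} (hsupp : HasCompactSupport φ)
    (hsmooth : ContDiff ℝ 2 φ) {m : ℕ} (hm : m ≤ 1)
    (hrep : ∀ t : ℝ, ∑' j : ℤ, (j : ℝ) ^ m * φ (t - j) = t ^ m) (q : ℝ) :
    ∑' j : ℤ, (j : ℝ) ^ m * deriv (deriv φ) (q - j) = 0 := by
  have hd : Differentiable ℝ φ := hsmooth.differentiable (by norm_num)
  have hd' : Differentiable ℝ (deriv φ) :=
    (hsmooth.iterate_deriv' 1 1).differentiable one_ne_zero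
  have h := congrArg (fun f => deriv (deriv f) q) (funext hrep)
  simp only [hsupp.deriv_tsum_mul_shift hd, hsupp.deriv.deriv_tsum_mul_shift hd'] at h
  rw [h]
  interval_cases m <;> simp

section psi

variable {φ : ℝ → ℝ} {r s : ℝ}

lemma psi_eq_zero_of_lt_neg (hr : tsupport (deriv (deriv φ)) ⊆ closedBall 0 r) (hs : s < -r)
    (q : ℝ) : psi φ q s = 0 := by
  refine (tsum_congr fun j => ?_).trans tsum_zero
  by_cases h : deriv (deriv φ) (q - j) = 0
  · simp [h]
  have hj : |q - j| ≤ r := by simpa using hr (subset_tsupport _ h)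
  rw [max_eq_right (by linarith [neg_le_abs (q - j)]), zero_mul]

lemma psi_eq_of_lt (hg : HasCompactSupport (deriv (deriv φ)))
    (hr : tsupport (deriv (deriv φ)) ⊆ closedBall 0 r) (hs : r < s) (q : ℝ) :
    psi φ q s = ∑' j : ℤ, (j : ℝ) * deriv (deriv φ) (q - j)
      + (s - q) * ∑' j : ℤ, deriv (deriv φ) (q - j) := by
  have hterm : ∀ j : ℤ, max ((j : ℝ) - q + s) 0 * deriv (deriv φ) (q - j)
      = (j : ℝ) * deriv (deriv φ) (q - j) + (s - q) * deriv (deriv φ) (q - j) := by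
    intro j
    by_cases h : deriv (deriv φ) (q - j) = 0
    · simp [h]
    have hj : |q - j| ≤ r := by simpa using hr (subset_tsupport _ h)
    rw [max_eq_left (by linarith [le_abs_self (q - j)])]
    ring
  rw [psi, tsum_congr hterm, (hg.summable_mul_shift _ q).tsum_add
    (hg.summable_mul_shift (fun _ => s - q) q), tsum_mul_left]

end psi

theorem stmt2 (φ : ℝ → ℝ)
    (hsupp : HasCompactSupport φ)
    (hsmooth : ContDiff ℝ 2 φ)
    (hA1 : ∀ m : ℕ, m ≤ 2 → ∀ t : ℝ,
      ∑' j : ℤ, (j : ℝ) ^ m * φ (t - (j : ℝ)) = t ^ m) :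
    ∃ c : ℝ, 0 < c ∧ ∀ s q : ℝ, c ≤ |s| → psi φ q s = 0 := by
  have hg : HasCompactSupport (deriv (deriv φ)) := hsupp.deriv.deriv
  obtain ⟨r, hr⟩ := hg.isCompact.isBounded.subset_closedBall 0
  refine ⟨max r 0 + 1, by positivity, fun s q hs => ?_⟩
  have hmoment : ∀ m ≤ 1, ∑' j : ℤ, (j : ℝ) ^ m * deriv (deriv φ) (q - j) = 0 :=
    fun m hm => tsum_pow_mul_deriv_deriv_shift_eq_zero hsupp hsmooth hm (hA1 m (by omega)) q
  have hr' : r < max r 0 + 1 := by linarith [le_max_left r 0]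
  rcases le_abs'.mp hs with hneg | hpos
  · exact psi_eq_zero_of_lt_neg hr (by linarith) q
  · have h0 : ∑' j : ℤ, deriv (deriv φ) (q - j) = 0 := by simpa using hmoment 0 zero_le_one
    have h1 : ∑' j : ℤ, (j : ℝ) * deriv (deriv φ) (q - j) = 0 := by
      simpa using hmoment 1 le_rfl
    rw [psi_eq_of_lt hg hr (by linarith) q, h0, h1]
    ring
end

section
/- Let φ: ℝ → ℝ be compactly supported, twice continuously differentiable, and satisfy Σ_{j∈ℤ} j^m φ(t − j) = t^m for all t ∈ ℝ and m = 0, 1, 2. Let g: ℝ → ℝ be three times differentiable with g, g', g'', g''' bounded on ℝ. Then there exists C > 0 such that for all ε ∈ (0, 1] and all t ∈ ℝ, | ε^{-2} Σ_{j∈ℤ} g(εj) φ''(t/ε − j) − g''(t) | ≤ C ε. -/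
/-!
Differentiating the reproduction identity twice, which is legitimate because the sums are locally
finite, shows that the weights `φ''(t/ε - j)` have the discrete moments `0, 0, 2` in `j`. Hence the
scheme is exact on the second-order Taylor polynomial of `g` at `t`, and the error is the sum of
`O(|εj - t|³) = O(ε³)` Taylor remainders over the at most `2R + 1` indices `j` with
`|t/ε - j| ≤ R`, where `supp φ'' ⊆ [-R, R]`, divided by `ε²`.
-/

open Finset Topology

lemma abs_sub_le_mul_abs_sub_pow_succ {f f' : ℝ → ℝ} {C t : ℝ} {n : ℕ}
    (hf : ∀ s, HasDerivAt f (f' s) s) (hf' : ∀ s, |f' s| ≤ C * |s - t| ^ n) (y : ℝ) :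
    |f y - f t| ≤ C * |y - t| ^ (n + 1) := by
  have hC : 0 ≤ C := by simpa using (abs_nonneg _).trans (hf' (t + 1))
  have hseg : ∀ s ∈ segment ℝ t y, ‖f' s‖ ≤ C * |y - t| ^ n := fun s hs => by
    rw [segment_eq_uIcc] at hs
    exact (hf' s).trans (by gcongr C * ?_ ^ n; exact Set.abs_sub_left_of_mem_uIcc hs)
  have := (convex_segment t y).norm_image_sub_le_of_norm_hasDerivWithin_le
    (fun s _ => (hf s).hasDerivWithinAt) hseg (left_mem_segment ℝ t y) (right_mem_segment ℝ t y)
  rw [pow_succ, ← mul_assoc]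
  simpa only [Real.norm_eq_abs] using this

lemma abs_sub_taylor_two_le {g : ℝ → ℝ} (hg1 : Differentiable ℝ g)
    (hg2 : Differentiable ℝ (deriv g)) (hg3 : Differentiable ℝ (deriv (deriv g))) {B : ℝ}
    (hB : ∀ x, |deriv (deriv (deriv g)) x| ≤ B) (t y : ℝ) :
    |g y - (g t + deriv g t * (y - t) + deriv (deriv g) t / 2 * (y - t) ^ 2)|
      ≤ B * |y - t| ^ 3 := by
  have h2 : ∀ s, |deriv (deriv g) s - deriv (deriv g) t| ≤ B * |s - t| ^ 1 :=
    abs_sub_le_mul_abs_sub_pow_succ (n := 0) (fun s => (hg3 s).hasDerivAt) (by simpa using hB)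
  have h1 : ∀ s, |deriv g s - (deriv g t + deriv (deriv g) t * (s - t))| ≤ B * |s - t| ^ 2 := by
    have := abs_sub_le_mul_abs_sub_pow_succ (f := fun u => deriv g u - deriv (deriv g) t * (u - t))
      (fun s => ((hg2 s).hasDerivAt.sub (((hasDerivAt_id s).sub_const t).const_mul _)).congr_deriv
        (by simp)) h2
    intro s; convert this s using 2; ring
  have := abs_sub_le_mul_abs_sub_pow_succ
    (f := fun u => g u - deriv g t * (u - t) - deriv (deriv g) t / 2 * (u - t) ^ 2)
    (fun s => ((hg1 s).hasDerivAt.sub (((hasDerivAt_id s).sub_const t).const_mul _) |>.sub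
      ((((hasDerivAt_id s).sub_const t).pow 2).const_mul _)).congr_deriv (by simp; ring)) h1 y
  convert this using 2; ring

lemma abs_sub_le_of_mem_Icc_ceil_floor {x R : ℝ} {j : ℤ} (hj : j ∈ Icc ⌈x - R⌉ ⌊x + R⌋) :
    |(j : ℝ) - x| ≤ R := by
  rw [mem_Icc] at hj
  have h1 : x - R ≤ j := (Int.le_ceil _).trans (by exact_mod_cast hj.1)
  have h2 : (j : ℝ) ≤ x + R := (Int.cast_le.mpr hj.2).trans (Int.floor_le _)
  exact abs_sub_le_iff.mpr ⟨by linarith, by linarith⟩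

lemma card_Icc_ceil_floor_le {x R : ℝ} (hR : 0 ≤ R) :
    (#(Icc ⌈x - R⌉ ⌊x + R⌋) : ℝ) ≤ 2 * R + 1 := by
  have h1 : x - R ≤ ⌈x - R⌉ := Int.le_ceil _
  have h2 : (⌊x + R⌋ : ℝ) ≤ x + R := Int.floor_le _
  rw [Int.card_Icc]
  rcases le_total (⌊x + R⌋ + 1 - ⌈x - R⌉) 0 with h | h
  · rw [Int.toNat_of_nonpos h]; push_cast; linarith
  · have : ((⌊x + R⌋ + 1 - ⌈x - R⌉).toNat : ℝ) = ⌊x + R⌋ + 1 - ⌈x - R⌉ := by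
      exact_mod_cast Int.toNat_of_nonneg h
    rw [this]; linarith

lemma tsum_int_shift_eq_sum {f : ℝ → ℝ} {R R' x u : ℝ} (hf : ∀ v, R < |v| → f v = 0)
    (hu : R + |u - x| ≤ R') (c : ℤ → ℝ) :
    ∑' j : ℤ, c j * f (u - j) = ∑ j ∈ Icc ⌈x - R'⌉ ⌊x + R'⌋, c j * f (u - j) := by
  refine tsum_eq_sum fun j hj => ?_
  suffices R < |u - j| by rw [hf _ this, mul_zero]
  rw [mem_Icc, not_and_or, not_le, not_le, Int.lt_ceil, Int.floor_lt] at hj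
  have := abs_le.mp (le_refl |u - x|)
  rcases hj with hj | hj
  · exact lt_abs.mpr (.inl (by linarith))
  · exact lt_abs.mpr (.inr (by linarith))

lemma eq_zero_of_tsupport_subset_closedBall {f : ℝ → ℝ} {R : ℝ}
    (hf : tsupport f ⊆ Metric.closedBall 0 R) {u : ℝ} (hu : R < |u|) : f u = 0 :=
  image_eq_zero_of_notMem_tsupport fun h => by
    simpa [Real.norm_eq_abs] using hu.trans_le (mem_closedBall_zero_iff.mp (hf h))

lemma hasDerivAt_tsum_int_shift {f : ℝ → ℝ} (hf : HasCompactSupport f)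
    (hdiff : Differentiable ℝ f) (c : ℤ → ℝ) (x : ℝ) :
    HasDerivAt (fun u => ∑' j : ℤ, c j * f (u - j)) (∑' j : ℤ, c j * deriv f (x - j)) x := by
  obtain ⟨R, hR⟩ := hf.isCompact.isBounded.subset_closedBall 0
  have hfR : ∀ v, R < |v| → f v = 0 := fun v => eq_zero_of_tsupport_subset_closedBall hR
  have hf'R : ∀ v, R < |v| → deriv f v = 0 := fun v =>
    eq_zero_of_tsupport_subset_closedBall (tsupport_deriv_subset.trans hR)
  have hlocal : (fun u => ∑' j : ℤ, c j * f (u - j)) =ᶠ[𝓝 x]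
      fun u => ∑ j ∈ Icc ⌈x - (R + 1)⌉ ⌊x + (R + 1)⌋, c j * f (u - j) := by
    filter_upwards [Metric.ball_mem_nhds x one_pos] with u hu
    exact tsum_int_shift_eq_sum hfR (by rw [Metric.mem_ball, Real.dist_eq] at hu; linarith) c
  rw [tsum_int_shift_eq_sum hf'R (x := x) (R' := R + 1) (by simp) c]
  refine HasDerivAt.congr_of_eventuallyEq ?_ hlocal
  exact HasDerivAt.fun_sum fun j _ => ((hdiff _).hasDerivAt.comp_sub_const x j).const_mul (c j)

lemma tsum_int_shift_deriv_deriv {f : ℝ → ℝ} (hf : HasCompactSupport f) (hf2 : ContDiff ℝ 2 f)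
    {c : ℤ → ℝ} {P : ℝ → ℝ} (hP : ∀ t, ∑' j : ℤ, c j * f (t - j) = P t) (x : ℝ) :
    ∑' j : ℤ, c j * deriv (deriv f) (x - j) = deriv (deriv P) x := by
  have hdiff : Differentiable ℝ f := hf2.differentiable (by norm_num)
  have hdiff' : Differentiable ℝ (deriv f) :=
    (ContDiff.deriv' (n := 1) hf2).differentiable one_ne_zero
  have hP' : deriv P = fun u => ∑' j : ℤ, c j * deriv f (u - j) := by
    rw [← funext hP]; exact funext fun u => (hasDerivAt_tsum_int_shift hf hdiff c u).deriv
  rw [hP', (hasDerivAt_tsum_int_shift hf.deriv hdiff' c x).deriv]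

lemma deriv_deriv_pow (m : ℕ) (x : ℝ) :
    deriv (deriv fun u : ℝ => u ^ m) x = m * (m - 1) * x ^ (m - 2) :=
  (iter_deriv_pow m x 2).trans (by simp [prod_range_succ])

lemma sum_quadratic_mul_eq {S : Finset ℤ} {w : ℤ → ℝ} (h0 : ∑ j ∈ S, w j = 0)
    (h1 : ∑ j ∈ S, (j : ℝ) * w j = 0) (h2 : ∑ j ∈ S, (j : ℝ) ^ 2 * w j = 2) (a b c ε t : ℝ) :
    ∑ j ∈ S, (a + b * (ε * j - t) + c * (ε * j - t) ^ 2) * w j = 2 * c * ε ^ 2 := by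
  calc ∑ j ∈ S, (a + b * (ε * j - t) + c * (ε * j - t) ^ 2) * w j
      = (a - b * t + c * t ^ 2) * ∑ j ∈ S, w j
          + (b * ε - 2 * c * ε * t) * ∑ j ∈ S, (j : ℝ) * w j
          + c * ε ^ 2 * ∑ j ∈ S, (j : ℝ) ^ 2 * w j := by
        simp only [mul_sum, ← sum_add_distrib]
        exact sum_congr rfl fun j _ => by ring
    _ = 2 * c * ε ^ 2 := by rw [h0, h1, h2]; ring

lemma abs_sum_div_sq_sub_deriv_deriv_le {g : ℝ → ℝ} (hg1 : Differentiable ℝ g)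
    (hg2 : Differentiable ℝ (deriv g)) (hg3 : Differentiable ℝ (deriv (deriv g))) {B : ℝ}
    (hB : ∀ x, |deriv (deriv (deriv g)) x| ≤ B) {S : Finset ℤ} {w : ℤ → ℝ}
    (h0 : ∑ j ∈ S, w j = 0) (h1 : ∑ j ∈ S, (j : ℝ) * w j = 0)
    (h2 : ∑ j ∈ S, (j : ℝ) ^ 2 * w j = 2) {K R x ε : ℝ} (hK : ∀ j ∈ S, |w j| ≤ K)
    (hR : ∀ j ∈ S, |(j : ℝ) - x| ≤ R) (hε : 0 < ε) :
    |(∑ j ∈ S, g (ε * j) * w j) / ε ^ 2 - deriv (deriv g) (ε * x)|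
      ≤ #S * (B * R ^ 3 * K) * ε := by
  set t := ε * x
  set T : ℝ → ℝ := fun y => g t + deriv g t * (y - t) + deriv (deriv g) t / 2 * (y - t) ^ 2
  have hB0 : 0 ≤ B := (abs_nonneg _).trans (hB 0)
  have hT : ∑ j ∈ S, T (ε * j) * w j = ε ^ 2 * deriv (deriv g) t := by
    rw [sum_quadratic_mul_eq h0 h1 h2]; ring
  have hrem : ∀ j ∈ S, |(g (ε * j) - T (ε * j)) * w j| ≤ B * R ^ 3 * K * ε ^ 3 := by
    intro j hj
    have hjt : |ε * j - t| ≤ ε * R := by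
      rw [← mul_sub, abs_mul, abs_of_pos hε]; exact mul_le_mul_of_nonneg_left (hR j hj) hε.le
    calc |(g (ε * j) - T (ε * j)) * w j| ≤ B * |ε * j - t| ^ 3 * K := by
          rw [abs_mul]
          exact mul_le_mul (abs_sub_taylor_two_le hg1 hg2 hg3 hB t _) (hK j hj) (abs_nonneg _)
            (by positivity)
      _ ≤ B * (ε * R) ^ 3 * K := by
          gcongr
          exact (abs_nonneg _).trans (hK j hj)
      _ = B * R ^ 3 * K * ε ^ 3 := by ring
  have hsplit : (∑ j ∈ S, g (ε * j) * w j) / ε ^ 2 - deriv (deriv g) t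
      = (∑ j ∈ S, (g (ε * j) - T (ε * j)) * w j) / ε ^ 2 := by
    rw [sum_congr rfl fun j _ => sub_mul _ _ _, sum_sub_distrib, hT]
    field_simp
  calc |(∑ j ∈ S, g (ε * j) * w j) / ε ^ 2 - deriv (deriv g) t|
      = |∑ j ∈ S, (g (ε * j) - T (ε * j)) * w j| / ε ^ 2 := by
        rw [hsplit, abs_div, abs_of_pos (pow_pos hε 2)]
    _ ≤ #S * (B * R ^ 3 * K * ε ^ 3) / ε ^ 2 := by
        gcongr
        exact (abs_sum_le_sum_abs _ _).trans
          ((sum_le_card_nsmul _ _ _ hrem).trans_eq (nsmul_eq_mul _ _))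
    _ = #S * (B * R ^ 3 * K) * ε := by field_simp

theorem stmt4 (φ : ℝ → ℝ)
    (hsupp : HasCompactSupport φ)
    (hsmooth : ContDiff ℝ 2 φ)
    (hA1 : ∀ m : ℕ, m ≤ 2 → ∀ t : ℝ,
      ∑' j : ℤ, (j : ℝ) ^ m * φ (t - (j : ℝ)) = t ^ m)
    (g : ℝ → ℝ)
    (hg1 : Differentiable ℝ g)
    (hg2 : Differentiable ℝ (deriv g))
    (hg3 : Differentiable ℝ (deriv (deriv g)))
    (B : ℝ)
    (hB : ∀ x : ℝ, |g x| ≤ B ∧ |deriv g x| ≤ B ∧ |deriv (deriv g) x| ≤ B ∧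
      |deriv (deriv (deriv g)) x| ≤ B) :
    ∃ C : ℝ, 0 < C ∧ ∀ ε : ℝ, ε ∈ Set.Ioc (0:ℝ) 1 → ∀ t : ℝ,
      |(∑' j : ℤ, g (ε * j) * deriv (deriv φ) (t / ε - (j : ℝ))) / ε ^ 2
        - deriv (deriv g) t| ≤ C * ε := by
  set ψ := deriv (deriv φ)
  have hψ : HasCompactSupport ψ := hsupp.deriv.deriv
  obtain ⟨R, hR, hψR⟩ := hψ.isCompact.isBounded.subset_closedBall_lt 0 0
  obtain ⟨K, hK⟩ : ∃ K, ∀ u, |ψ u| ≤ K := by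
    simpa only [Real.norm_eq_abs] using hψ.exists_bound_of_continuous
      ((ContDiff.deriv' (n := 1) hsmooth).continuous_deriv le_rfl)
  have hB0 : 0 ≤ B := (abs_nonneg _).trans (hB 0).1
  have hK0 : 0 ≤ K := (abs_nonneg _).trans (hK 0)
  refine ⟨(2 * R + 1) * (B * R ^ 3 * K) + 1, by positivity, fun ε hε t => ?_⟩
  set x := t / ε
  set S := Icc ⌈x - R⌉ ⌊x + R⌋
  have hS (c : ℤ → ℝ) : ∑' j : ℤ, c j * ψ (x - j) = ∑ j ∈ S, c j * ψ (x - j) :=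
    tsum_int_shift_eq_sum (fun _ => eq_zero_of_tsupport_subset_closedBall hψR) (by simp) c
  have hmoment (m : ℕ) (hm : m ≤ 2) :
      ∑ j ∈ S, (j : ℝ) ^ m * ψ (x - j) = m * (m - 1) * x ^ (m - 2) := by
    rw [← hS, tsum_int_shift_deriv_deriv hsupp hsmooth (hA1 m hm), deriv_deriv_pow]
  have key := abs_sum_div_sq_sub_deriv_deriv_le hg1 hg2 hg3 (fun u => (hB u).2.2.2)
    (S := S) (w := fun j => ψ (x - j)) (x := x)
    (by simpa using hmoment 0 (by norm_num)) (by simpa using hmoment 1 (by norm_num))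
    (by norm_num [hmoment 2]) (fun _ _ => hK _) (fun _ => abs_sub_le_of_mem_Icc_ceil_floor) hε.1
  rw [mul_div_cancel₀ t hε.1.ne', ← hS] at key
  refine key.trans (mul_le_mul_of_nonneg_right ?_ hε.1.le)
  have := mul_le_mul_of_nonneg_right (card_Icc_ceil_floor_le (x := x) hR.le)
    (by positivity : 0 ≤ B * R ^ 3 * K)
  linarith
end

section
/- Let a < b and let f be a real-valued, twice continuously differentiable function on [a, b] such that f''(t) ≠ 0 for all t ∈ [a, b] and there exists n ∈ ℤ with n < f'(a) < n + 1 and n < f'(b) < n + 1. Then for every nonzero integer M, the Weyl sums J(ε) := ε · Σ_{i ∈ ℤ, εi ∈ [a, b]} exp(2πi M f(εi)/ε) tend to 0 as ε → 0⁺. -/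
/-!
Choose the sign `σ = ±1` with `σ M f'' > 0` on `[a, b]`; conjugation does not change `|J(ε)|`,
and the phase `φ = σ M f` is `K`-Lipschitz and `κ`-strongly convex (`φ'' ≥ κ > 0`). The phases
`g k = φ(ε (A + k)) / ε` of the sum then have first differences in `[-K, K]` and second
differences at least `κ ε` (van der Corput's second derivative test). Group the indices `k` by the
integer part of `Δg k - δ`; there are at most `2K + 2` groups. Inside a group, the indices where
`Δg k` stays at distance `≥ δ` from `ℤ` form an interval on which the Kusmin–Landau inequality
bounds the sum by `2 / δ`, and since `Δg` grows by at least `κ ε` per step, at most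
`2δ / (κ ε) + 1` indices remain. Hence `ε |J(ε)| ≤ ε + (2K + 2) (2δ / κ + ε + 2 ε / δ)`, which is
`O(√ε)` for `δ = √ε`.
-/

open Filter

lemma IsPreconnected.forall_pos_or_forall_neg {X : Type*} [TopologicalSpace X] {s : Set X}
    (hs : IsPreconnected s) {h : X → ℝ} (hcont : ContinuousOn h s) (hne : ∀ x ∈ s, h x ≠ 0) :
    (∀ x ∈ s, 0 < h x) ∨ (∀ x ∈ s, h x < 0) := by
  by_contra hcon
  simp only [not_or, not_forall, not_lt] at hcon
  obtain ⟨⟨x, hx, hx0⟩, ⟨y, hy, hy0⟩⟩ := hcon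
  obtain ⟨z, hz, hz0⟩ := hs.intermediate_value hx hy hcont ⟨hx0, hy0⟩
  exact hne z hz hz0

lemma strongConvexOn_of_hasDerivWithinAt2_ge {D : Set ℝ} (hD : Convex ℝ D) {f f' f'' : ℝ → ℝ}
    {m : ℝ} (hf : ContinuousOn f D)
    (hf' : ∀ x ∈ interior D, HasDerivWithinAt f (f' x) (interior D) x)
    (hf'' : ∀ x ∈ interior D, HasDerivWithinAt f' (f'' x) (interior D) x)
    (hm : ∀ x ∈ interior D, m ≤ f'' x) : StrongConvexOn D m f := by
  rw [strongConvexOn_iff_convex]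
  simp only [Real.norm_eq_abs, sq_abs]
  refine convexOn_of_hasDerivWithinAt2_nonneg hD (f' := fun x => f' x - m * x)
    (f'' := fun x => f'' x - m) (hf.sub (by fun_prop)) (fun x hx => ?_) (fun x hx => ?_)
    fun x hx => sub_nonneg.2 (hm x hx)
  · exact ((hf' x hx).sub ((hasDerivAt_pow 2 x).const_mul (m / 2)).hasDerivWithinAt).congr_deriv
      (by push_cast; ring)
  · exact ((hf'' x hx).sub ((hasDerivAt_id x).const_mul m).hasDerivWithinAt).congr_deriv
      (by simp)

lemma exists_sign_mul_strongConvexOn {a b c : ℝ} (hab : a < b) {f : ℝ → ℝ}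
    (hf : ContDiffOn ℝ 2 f (Set.Icc a b))
    (hf'' : ∀ t ∈ Set.Icc a b, derivWithin (derivWithin f (Set.Icc a b)) (Set.Icc a b) t ≠ 0)
    (hc : c ≠ 0) :
    ∃ σ : ℝ, (σ = 1 ∨ σ = -1) ∧ ∃ κ > 0, StrongConvexOn (Set.Icc a b) κ fun x => σ * c * f x := by
  set I := Set.Icc a b
  set f' := derivWithin f I
  have hf1 : ContDiffOn ℝ 1 f' I := hf.derivWithin (uniqueDiffOn_Icc hab) (by norm_num)
  have hcont : ContinuousOn (fun x => c * derivWithin f' I x) I :=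
    continuousOn_const.mul (hf1.continuousOn_derivWithin (uniqueDiffOn_Icc hab) le_rfl)
  obtain ⟨σ, hσ, hσpos⟩ : ∃ σ : ℝ, (σ = 1 ∨ σ = -1) ∧ ∀ x ∈ I, 0 < σ * (c * derivWithin f' I x) := by
    rcases isPreconnected_Icc.forall_pos_or_forall_neg hcont
      (fun x hx => mul_ne_zero hc (hf'' x hx)) with h | h
    · exact ⟨1, .inl rfl, fun x hx => by simpa using h x hx⟩
    · exact ⟨-1, .inr rfl, fun x hx => by simpa using h x hx⟩
  obtain ⟨κ, hκ, hκle⟩ := isCompact_Icc.exists_forall_le'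
    (f := fun x => σ * (c * derivWithin f' I x)) (continuousOn_const.mul hcont) hσpos
  refine ⟨σ, hσ, κ, hκ, strongConvexOn_of_hasDerivWithinAt2_ge (convex_Icc a b)
    (f' := fun x => σ * c * f' x) (f'' := fun x => σ * c * derivWithin f' I x)
    (continuousOn_const.mul hf.continuousOn) (fun x hx => ?_) (fun x hx => ?_)
    fun x hx => (hκle x (interior_subset hx)).trans_eq (by ring)⟩
  · exact (((hf.differentiableOn (by norm_num) x (interior_subset hx)).hasDerivWithinAt).const_mul
      (σ * c)).mono interior_subset
  · exact (((hf1.differentiableOn one_ne_zero x (interior_subset hx)).hasDerivWithinAt).const_mul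
      (σ * c)).mono interior_subset

namespace Finset

lemma eq_Icc_min'_max' {α : Type*} [LinearOrder α] [LocallyFiniteOrder α] {s : Finset α}
    (hs : s.Nonempty) (hconn : (s : Set α).OrdConnected) : s = Icc (s.min' hs) (s.max' hs) := by
  ext k
  refine ⟨fun hk => mem_Icc.2 ⟨s.min'_le k hk, s.le_max' k hk⟩, fun hk => ?_⟩
  exact hconn.out (s.min'_mem hs) (s.max'_mem hs) (mem_Icc.1 hk)

lemma card_le_of_forall_sub_le {s : Finset ℕ} {L : ℝ} (hL : 0 ≤ L)
    (h : ∀ i ∈ s, ∀ j ∈ s, i ≤ j → (j - i : ℝ) ≤ L) : (#s : ℝ) ≤ L + 1 := by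
  rcases s.eq_empty_or_nonempty with rfl | hs
  · simp only [card_empty, Nat.cast_zero]
    linarith
  have hsub : s ⊆ Icc (s.min' hs) (s.max' hs) :=
    fun k hk => mem_Icc.2 ⟨s.min'_le k hk, s.le_max' k hk⟩
  have hmin := s.min'_le _ (s.max'_mem hs)
  calc (#s : ℝ) ≤ #(Icc (s.min' hs) (s.max' hs)) := by exact_mod_cast card_le_card hsub
    _ = (s.max' hs : ℝ) - s.min' hs + 1 := by
        rw [Nat.card_Icc, Nat.cast_sub (by omega)]
        push_cast
        ring
    _ ≤ L + 1 := by gcongr; exact h _ (s.min'_mem hs) _ (s.max'_mem hs) hmin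

lemma norm_sum_range_mul_sub_le (u w : ℕ → ℂ) (n : ℕ) (hw : ∀ k, ‖w k‖ = 1) :
    ‖∑ k ∈ range n, u k * (w (k + 1) - w k)‖ ≤
      2 * ‖u (n - 1)‖ + 2 * ∑ k ∈ range (n - 1), ‖u (k + 1) - u k‖ := by
  have hw2 : ∀ j k, ‖w j - w k‖ ≤ 2 := fun j k => by
    linarith [norm_sub_le (w j) (w k), hw j, hw k]
  have hparts := sum_range_by_parts u (fun k => w (k + 1) - w k) n
  simp only [smul_eq_mul, sum_range_sub w] at hparts
  rw [hparts, mul_sum]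
  refine (norm_sub_le _ _).trans
    (add_le_add ?_ ((norm_sum_le _ _).trans (sum_le_sum fun k _ => ?_))) <;>
  · rw [norm_mul, mul_comm]
    gcongr
    exact hw2 _ _

end Finset

namespace Real

lemma cot_le_cot {x y : ℝ} (hx : 0 < x) (hxy : x ≤ y) (hy : y < π) : cot y ≤ cot x := by
  have hsx : 0 < sin x := sin_pos_of_pos_of_lt_pi hx (hxy.trans_lt hy)
  have hsy : 0 < sin y := sin_pos_of_pos_of_lt_pi (hx.trans_le hxy) hy
  rw [cot_eq_cos_div_sin, cot_eq_cos_div_sin, div_le_div_iff₀ hsy hsx]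
  have h := sin_nonneg_of_nonneg_of_le_pi (x := y - x) (by linarith) (by linarith)
  rw [sin_sub] at h
  linarith

lemma two_mul_min_le_sin_pi_mul {t : ℝ} (h0 : 0 ≤ t) (h1 : t ≤ 1) :
    2 * min t (1 - t) ≤ sin (π * t) := by
  rcases le_total t (1 / 2) with ht | ht
  · have := mul_le_sin (x := π * t) (by positivity) (by nlinarith [pi_pos])
    rw [min_eq_left (by linarith)]
    convert this using 1
    field_simp
  · have := mul_le_sin (x := π * (1 - t)) (by nlinarith [pi_pos]) (by nlinarith [pi_pos])
    rw [min_eq_right (by linarith), show π * t = π - π * (1 - t) by ring, sin_pi_sub]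
    convert this using 1
    field_simp

lemma abs_cot_pi_mul_le {δ t : ℝ} (hδ : 0 < δ) (ht : t ∈ Set.Icc δ (1 - δ)) :
    |cot (π * t)| ≤ 1 / (2 * δ) := by
  obtain ⟨h0, h1⟩ := ht
  have hs : 2 * δ ≤ sin (π * t) :=
    le_trans (by gcongr; exact le_min h0 (by linarith))
      (two_mul_min_le_sin_pi_mul (by linarith) (by linarith))
  rw [cot_eq_cos_div_sin, abs_div, abs_of_pos (show 0 < sin (π * t) by linarith)]
  exact div_le_div₀ zero_le_one (abs_cos_le_one _) (by positivity) hs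

end Real

namespace VanDerCorput

open Real Complex Finset ComplexConjugate
open scoped NNReal Topology

noncomputable def e (x : ℝ) : ℂ := Complex.exp (2 * π * I * x)

lemma norm_e (x : ℝ) : ‖e x‖ = 1 := by
  rw [e, Complex.norm_exp]
  simp

lemma e_add (x y : ℝ) : e (x + y) = e x * e y := by
  rw [e, e, e, ← Complex.exp_add]
  push_cast
  ring_nf

lemma e_eq_one_iff {x : ℝ} : e x = 1 ↔ ∃ m : ℤ, x = m := by
  rw [e, Complex.exp_eq_one_iff]
  refine exists_congr fun m => ⟨fun h => ?_, fun h => by rw [h]; push_cast; ring⟩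
  have hπ : (2 * π * I : ℂ) ≠ 0 := by simp [Real.pi_ne_zero]
  exact_mod_cast mul_left_cancel₀ hπ (h.trans (mul_comm _ _))

lemma e_add_intCast (x : ℝ) (m : ℤ) : e (x + m) = e x := by
  rw [e_add, e_eq_one_iff.2 ⟨m, rfl⟩, mul_one]

lemma e_ne_one {δ t : ℝ} (hδ : 0 < δ) (ht : t ∈ Set.Icc δ (1 - δ)) : e t ≠ 1 := by
  rw [Ne, e_eq_one_iff]
  rintro ⟨j, rfl⟩
  have h0 : (0 : ℝ) < j := by linarith [ht.1]
  have h1 : (j : ℝ) < 1 := by linarith [ht.2]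
  norm_cast at h0 h1
  omega

lemma e_neg (x : ℝ) : e (-x) = conj (e x) := by
  rw [e, e, ← Complex.exp_conj]
  simp [map_ofNat]

lemma e_eq_inv_e_sub_one_mul (x : ℝ) {t : ℝ} (ht : e t ≠ 1) :
    e x = (e t - 1)⁻¹ * (e (x + t) - e x) := by
  rw [e_add]
  field_simp [sub_ne_zero.2 ht]

lemma inv_e_sub_one {t : ℝ} (ht : e t ≠ 1) :
    (e t - 1)⁻¹ = -1 / 2 - I / 2 * Real.cot (π * t) := by
  have h1 : 1 - e t ≠ 0 := sub_ne_zero.2 (Ne.symm ht)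
  rw [ofReal_cot, ofReal_mul, Complex.cot_pi_eq_exp_ratio, ← e]
  field_simp
  ring_nf

lemma norm_neg_half_sub_I_half_mul_le (c : ℝ) : ‖(-1 / 2 - I / 2 * c : ℂ)‖ ≤ 1 / 2 + |c| / 2 :=
  (norm_sub_le _ _).trans (le_of_eq (by simp [Complex.norm_real]; ring))

lemma norm_neg_half_sub_I_half_mul_sub (c c' : ℝ) :
    ‖(-1 / 2 - I / 2 * c : ℂ) - (-1 / 2 - I / 2 * c')‖ = |c - c'| / 2 := by
  rw [show (-1 / 2 - I / 2 * c : ℂ) - (-1 / 2 - I / 2 * c') = -I / 2 * ((c - c' : ℝ) : ℂ) by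
    push_cast; ring, norm_mul, Complex.norm_real, Real.norm_eq_abs]
  simp
  ring

lemma norm_sum_e_le_card {ι : Type*} (s : Finset ι) (g : ι → ℝ) : ‖∑ k ∈ s, e (g k)‖ ≤ #s :=
  (norm_sum_le _ _).trans (by simp [norm_e])

lemma norm_sum_e_sign_mul {ι : Type*} (s : Finset ι) (g : ι → ℝ) {σ : ℝ} (hσ : σ = 1 ∨ σ = -1) :
    ‖∑ i ∈ s, e (σ * g i)‖ = ‖∑ i ∈ s, e (g i)‖ := by
  rcases hσ with rfl | rfl
  · simp
  · simp only [neg_one_mul, e_neg, ← map_sum, Complex.norm_conj]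

/- Kusmin–Landau. With `t k = Δg k - m`, `e (g k) = u k * (e (g (k + 1)) - e (g k))` where
`u k = (e (t k) - 1)⁻¹ = -1/2 - (i/2) cot (π t k)`; the real parts of the `u k` agree and their
imaginary parts are monotone, so the summation-by-parts error telescopes. -/
theorem norm_sum_e_le_of_monotone_increments (g : ℕ → ℝ) (n : ℕ) (m : ℤ) {δ : ℝ} (hδ : 0 < δ)
    (hwin : ∀ k < n, g (k + 1) - g k - m ∈ Set.Icc δ (1 - δ))
    (hmono : ∀ k, k + 1 < n → g (k + 1) - g k ≤ g (k + 2) - g (k + 1)) :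
    ‖∑ k ∈ range n, e (g k)‖ ≤ 2 / δ := by
  rcases Nat.eq_zero_or_pos n with rfl | hn
  · simp only [range_zero, sum_empty, norm_zero]
    positivity
  set t : ℕ → ℝ := fun k => g (k + 1) - g k - m
  set c : ℕ → ℝ := fun k => Real.cot (π * t k)
  have hc : ∀ k < n, |c k| ≤ 1 / (2 * δ) := fun k hk => abs_cot_pi_mul_le hδ (hwin k hk)
  have hc_anti : ∀ k, k + 1 < n → c (k + 1) ≤ c k := by
    intro k hk
    have h1 := (hwin k (by omega)).1
    have h2 := (hwin (k + 1) hk).2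
    have ht : t k ≤ t (k + 1) := by simp only [t]; linarith [hmono k hk]
    exact cot_le_cot (by nlinarith [pi_pos]) (by gcongr) (by nlinarith [pi_pos])
  have hterm : ∀ k < n, e (g k) = (-1 / 2 - I / 2 * c k) * (e (g (k + 1)) - e (g k)) := by
    intro k hk
    have hne := e_ne_one hδ (hwin k hk)
    have hw : e (g (k + 1)) = e (g k + t k) := by
      rw [← e_add_intCast (g k + t k) m]
      congr 1
      simp only [t]
      ring
    rw [hw, ← inv_e_sub_one hne]
    exact e_eq_inv_e_sub_one_mul _ hne
  have hdu : ∀ k ∈ range (n - 1),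
      ‖(-1 / 2 - I / 2 * c (k + 1) : ℂ) - (-1 / 2 - I / 2 * c k)‖ = (c k - c (k + 1)) / 2 := by
    intro k hk
    rw [norm_neg_half_sub_I_half_mul_sub, abs_sub_comm,
      abs_of_nonneg (sub_nonneg.2 (hc_anti k (by rw [mem_range] at hk; omega)))]
  rw [sum_congr rfl fun k hk => hterm k (mem_range.1 hk)]
  refine (norm_sum_range_mul_sub_le _ _ n fun k => norm_e _).trans ?_
  rw [sum_congr rfl hdu, ← sum_div, sum_range_sub' c]
  have h0 := abs_le.1 (hc 0 hn)
  have h1 := abs_le.1 (hc (n - 1) (by omega))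
  have hδ2 : 1 ≤ 1 / (2 * δ) := by
    rw [le_div_iff₀ (by positivity)]
    linarith [(hwin 0 hn).1, (hwin 0 hn).2]
  have : 2 / δ = 4 * (1 / (2 * δ)) := by field_simp; ring
  linarith [hc (n - 1) (by omega), norm_neg_half_sub_I_half_mul_le (c (n - 1))]

theorem norm_sum_filter_e_le_of_monotoneOn (g : ℕ → ℝ) (n : ℕ) (m : ℤ) {δ : ℝ} (hδ : 0 < δ)
    (hmono : MonotoneOn (fun k => g (k + 1) - g k) (Set.Iio n)) :
    ‖∑ k ∈ (range n).filter (fun k => g (k + 1) - g k - m ∈ Set.Icc δ (1 - δ)), e (g k)‖ ≤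
      2 / δ := by
  set G := (range n).filter (fun k => g (k + 1) - g k - m ∈ Set.Icc δ (1 - δ))
  rcases G.eq_empty_or_nonempty with hGe | hGne
  · rw [hGe, sum_empty, norm_zero]
    positivity
  have hG : ∀ k, k ∈ G ↔ k < n ∧ δ ≤ g (k + 1) - g k - m ∧ g (k + 1) - g k - m ≤ 1 - δ := by
    simp [G]
  have hconn : (G : Set ℕ).OrdConnected := by
    refine ⟨fun i hi j hj k hk => ?_⟩
    rw [mem_coe, hG] at hi hj ⊢
    have hkn : k < n := hk.2.trans_lt hj.1
    have hik := hmono (hk.1.trans_lt hkn) hkn hk.1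
    have hkj := hmono hkn hj.1 hk.2
    exact ⟨hkn, by linarith [hi.2.1], by linarith [hj.2.2]⟩
  set p := G.min' hGne
  set q := G.max' hGne
  have hmem : ∀ j, j < q + 1 - p → p + j ∈ G := fun j hj => by
    have := G.min'_le _ (G.max'_mem hGne)
    rw [eq_Icc_min'_max' hGne hconn, mem_Icc]
    omega
  rw [eq_Icc_min'_max' hGne hconn, ← Ico_add_one_right_eq_Icc, sum_Ico_eq_sum_range]
  refine norm_sum_e_le_of_monotone_increments (fun j => g (p + j)) _ m hδ
    (fun j hj => ((hG _).1 (hmem j hj)).2) fun j hj => ?_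
  have hj1 : p + (j + 1) < n := ((hG _).1 (hmem (j + 1) hj)).1
  exact hmono (a := p + j) (b := p + j + 1) (show p + j < n by omega) hj1 (by omega)

theorem norm_sum_filter_floor_eq_e_le (g : ℕ → ℝ) (n : ℕ) {σ δ : ℝ} (hσ : 0 < σ) (hδ : 0 < δ)
    (hchain : ∀ i j, i ≤ j → j < n → σ * (j - i) ≤ (g (j + 1) - g j) - (g (i + 1) - g i))
    (m : ℤ) :
    ‖∑ k ∈ (range n).filter (fun k => ⌊g (k + 1) - g k - δ⌋ = m), e (g k)‖ ≤
      2 * δ / σ + 1 + 2 / δ := by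
  have hmono : MonotoneOn (fun k => g (k + 1) - g k) (Set.Iio n) := fun i _ j hj hij => by
    have : (0 : ℝ) ≤ j - i := by simp [hij]
    nlinarith [hchain i j hij hj]
  rw [← sum_filter_add_sum_filter_not _ (fun k => g (k + 1) - g k ≤ m + 1 - δ), filter_filter,
    filter_filter, add_comm (2 * δ / σ + 1)]
  refine (norm_add_le _ _).trans (add_le_add ?_ ?_)
  · rw [filter_congr (q := fun k => g (k + 1) - g k - m ∈ Set.Icc δ (1 - δ)) fun k _ => by
      simp only [Int.floor_eq_iff, Set.mem_Icc]
      constructor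
      · rintro ⟨⟨h1, -⟩, h2⟩
        exact ⟨by linarith, by linarith⟩
      · rintro ⟨h1, h2⟩
        exact ⟨⟨by linarith, by linarith⟩, by linarith⟩]
    exact norm_sum_filter_e_le_of_monotoneOn g n m hδ hmono
  · refine (norm_sum_e_le_card _ _).trans (card_le_of_forall_sub_le (by positivity)
      fun i hi j hj hij => ?_)
    simp only [mem_filter, mem_range, Int.floor_eq_iff, not_le] at hi hj
    have := hchain i j hij hj.1
    rw [le_div_iff₀ hσ]
    linarith [hi.2.2, hj.2.1.2]

theorem norm_sum_e_le_of_second_diff_ge (g : ℕ → ℝ) (n : ℕ) {σ δ P Q : ℝ} (hσ : 0 < σ)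
    (hδ : 0 < δ) (hPQ : P ≤ Q) (hΔ : ∀ k < n, g (k + 1) - g k ∈ Set.Icc P Q)
    (hΔ2 : ∀ k, k + 1 < n → σ ≤ (g (k + 2) - g (k + 1)) - (g (k + 1) - g k)) :
    ‖∑ k ∈ range n, e (g k)‖ ≤ (Q - P + 2) * (2 * δ / σ + 1 + 2 / δ) := by
  have hchain : ∀ i j, i ≤ j → j < n → σ * (j - i) ≤ (g (j + 1) - g j) - (g (i + 1) - g i) := by
    have hmono : MonotoneOn (fun k : ℕ => (g (k + 1) - g k) - σ * k) (Set.Iio n) := by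
      refine monotoneOn_of_le_add_one Set.ordConnected_Iio fun k _ _ hk => ?_
      push_cast
      linarith [hΔ2 k hk]
    intro i j hij hj
    linarith [hmono (show i < n by omega) hj hij]
  have hmaps : ∀ k ∈ range n, ⌊g (k + 1) - g k - δ⌋ ∈ Icc ⌊P - δ⌋ ⌊Q - δ⌋ := fun k hk =>
    have := hΔ k (mem_range.1 hk)
    mem_Icc.2 ⟨Int.floor_mono (by linarith [this.1]), Int.floor_mono (by linarith [this.2])⟩
  rw [← sum_fiberwise_of_maps_to hmaps]
  calc _ ≤ ∑ m ∈ Icc ⌊P - δ⌋ ⌊Q - δ⌋, (2 * δ / σ + 1 + 2 / δ) :=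
        (norm_sum_le _ _).trans
          (sum_le_sum fun m _ => norm_sum_filter_floor_eq_e_le g n hσ hδ hchain m)
    _ ≤ (Q - P + 2) * (2 * δ / σ + 1 + 2 / δ) := by
        rw [sum_const, nsmul_eq_mul, Int.card_Icc]
        gcongr
        have h1 := Int.floor_le (Q - δ)
        have h2 := Int.lt_floor_add_one (P - δ)
        have h3 : ⌊P - δ⌋ ≤ ⌊Q - δ⌋ := Int.floor_mono (by linarith)
        have h4 : ((⌊Q - δ⌋ + 1 - ⌊P - δ⌋).toNat : ℝ) = ((⌊Q - δ⌋ + 1 - ⌊P - δ⌋ : ℤ) : ℝ) := by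
          exact_mod_cast Int.toNat_of_nonneg (by omega)
        rw [h4]
        push_cast
        linarith

theorem norm_sum_e_le_one_add_of_second_diff_ge (g : ℕ → ℝ) (n : ℕ) {σ δ P Q : ℝ} (hσ : 0 < σ)
    (hδ : 0 < δ) (hPQ : P ≤ Q) (hΔ : ∀ k, k + 1 < n → g (k + 1) - g k ∈ Set.Icc P Q)
    (hΔ2 : ∀ k, k + 2 < n → σ ≤ (g (k + 2) - g (k + 1)) - (g (k + 1) - g k)) :
    ‖∑ k ∈ range n, e (g k)‖ ≤ 1 + (Q - P + 2) * (2 * δ / σ + 1 + 2 / δ) := by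
  cases n with
  | zero =>
    have : 0 ≤ Q - P + 2 := by linarith
    simp only [range_zero, sum_empty, norm_zero]
    positivity
  | succ n =>
    rw [sum_range_succ, add_comm 1]
    refine (norm_add_le _ _).trans (add_le_add ?_ (norm_e _).le)
    exact norm_sum_e_le_of_second_diff_ge g n hσ hδ hPQ (fun k hk => hΔ k (by omega))
      fun k hk => hΔ2 k (by omega)

theorem norm_sum_e_le_of_strongConvexOn {φ : ℝ → ℝ} {a b κ ε δ : ℝ} {K : ℝ≥0}
    (hφ : LipschitzOnWith K φ (Set.Icc a b)) (hκ : 0 < κ)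
    (hconv : StrongConvexOn (Set.Icc a b) κ φ) (hε : 0 < ε) (hδ : 0 < δ) :
    ‖∑ i ∈ Icc ⌈a / ε⌉ ⌊b / ε⌋, e (φ (ε * i) / ε)‖ ≤
      1 + (2 * K + 2) * (2 * δ / (κ * ε) + 1 + 2 / δ) := by
  set A := ⌈a / ε⌉
  set B := ⌊b / ε⌋
  set x : ℕ → ℝ := fun k => ε * (A + k)
  have hx : ∀ k, k < (B + 1 - A).toNat → x k ∈ Set.Icc a b := by
    intro k hk
    have hkB : (A : ℝ) + k ≤ B := by exact_mod_cast (show A + k ≤ B by omega)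
    have hA : a / ε ≤ A := Int.le_ceil _
    have hB : (B : ℝ) ≤ b / ε := Int.floor_le _
    rw [div_le_iff₀ hε] at hA
    rw [le_div_iff₀ hε] at hB
    have : (A : ℝ) ≤ A + k := by simp
    constructor <;> simp only [x] <;> nlinarith
  have hstep : ∀ k, x (k + 1) - x k = ε := fun k => by simp only [x]; push_cast; ring
  rw [Int.Icc_eq_finset_map, sum_map]
  simp only [Function.Embedding.trans_apply, Nat.castEmbedding_apply, addLeftEmbedding_apply,
    Int.cast_add, Int.cast_natCast]
  refine (norm_sum_e_le_one_add_of_second_diff_ge (fun k => φ (x k) / ε) _ (mul_pos hκ hε) hδ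
    (P := -K) (Q := K) (by simp) (fun k hk => ?_) (fun k hk => ?_)).trans (le_of_eq (by ring))
  · have hd := hφ.dist_le_mul (x (k + 1)) (hx _ hk) (x k) (hx _ (by omega))
    rw [Real.dist_eq, Real.dist_eq, hstep, abs_of_pos hε, abs_le] at hd
    rw [← sub_div, Set.mem_Icc, le_div_iff₀ hε, div_le_iff₀ hε]
    constructor <;> linarith [hd.1, hd.2]
  · have hc := (strongConvexOn_iff_convex.1 hconv).slope_mono_adjacent (y := x (k + 1))
      (hx k (by omega)) (hx (k + 2) hk) (by linarith [hstep k]) (by linarith [hstep (k + 1)])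
    simp only [Real.norm_eq_abs, sq_abs] at hc
    rw [hstep, show x (k + 2) - x (k + 1) = ε from hstep (k + 1),
      div_le_div_iff_of_pos_right hε] at hc
    have hsq : x (k + 2) ^ 2 - 2 * x (k + 1) ^ 2 + x k ^ 2 = 2 * ε ^ 2 := by
      simp only [x]; push_cast; ring
    rw [← sub_div, ← sub_div, ← sub_div, le_div_iff₀ hε]
    nlinarith

theorem tendsto_mul_norm_sum_e_nhdsGT_zero {φ : ℝ → ℝ} {a b κ : ℝ} {K : ℝ≥0}
    (hφ : LipschitzOnWith K φ (Set.Icc a b)) (hκ : 0 < κ)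
    (hconv : StrongConvexOn (Set.Icc a b) κ φ) :
    Tendsto (fun ε : ℝ => ε * ‖∑ i ∈ Icc ⌈a / ε⌉ ⌊b / ε⌋, e (φ (ε * i) / ε)‖) (𝓝[>] 0) (𝓝 0) := by
  set C : ℝ := 2 * K + 2
  have hbound : ∀ ε : ℝ, 0 < ε → ε * ‖∑ i ∈ Icc ⌈a / ε⌉ ⌊b / ε⌋, e (φ (ε * i) / ε)‖ ≤
      ε + C * (2 * √ε / κ + ε + 2 * √ε) := by
    intro ε hε
    have hs : 0 < √ε := Real.sqrt_pos.2 hε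
    have key : ∀ s : ℝ, 0 < s → s ^ 2 * (1 + C * (2 * s / (κ * s ^ 2) + 1 + 2 / s)) =
        s ^ 2 + C * (2 * s / κ + s ^ 2 + 2 * s) := fun s hs => by field_simp
    calc _ ≤ ε * (1 + C * (2 * √ε / (κ * ε) + 1 + 2 / √ε)) :=
          mul_le_mul_of_nonneg_left (norm_sum_e_le_of_strongConvexOn hφ hκ hconv hε hs) hε.le
      _ = ε + C * (2 * √ε / κ + ε + 2 * √ε) := by
          simpa only [Real.sq_sqrt hε.le] using key √ε hs
  have hlim : Tendsto (fun ε : ℝ => ε + C * (2 * √ε / κ + ε + 2 * √ε)) (𝓝 0) (𝓝 0) := by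
    simpa using (Continuous.tendsto (by fun_prop) 0 :
      Tendsto (fun ε : ℝ => ε + C * (2 * √ε / κ + ε + 2 * √ε)) _ _)
  refine squeeze_zero' ?_ ?_ (hlim.mono_left nhdsWithin_le_nhds)
  · filter_upwards [self_mem_nhdsWithin] with ε (hε : 0 < ε)
    positivity
  · filter_upwards [self_mem_nhdsWithin] with ε hε using hbound ε hε

end VanDerCorput

open VanDerCorput in
theorem stmt11_general (a b : ℝ) (hab : a < b) (f : ℝ → ℝ)
    (hf : ContDiffOn ℝ 2 f (Set.Icc a b))
    (hf'' : ∀ t ∈ Set.Icc a b,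
      derivWithin (derivWithin f (Set.Icc a b)) (Set.Icc a b) t ≠ 0)
    (M : ℤ) (hM : M ≠ 0) :
    Tendsto
      (fun ε : ℝ => (ε : ℂ) *
        ∑ i ∈ Finset.Icc ⌈a / ε⌉ ⌊b / ε⌋,
          Complex.exp (2 * Real.pi * Complex.I * (M : ℂ) * (f (ε * i) / ε)))
      (nhdsWithin 0 (Set.Ioi 0)) (nhds 0) := by
  obtain ⟨σ, hσ, κ, hκ, hconv⟩ :=
    exists_sign_mul_strongConvexOn (c := M) hab hf hf'' (by exact_mod_cast hM)
  obtain ⟨K, hK⟩ := (contDiffOn_const.mul hf).exists_lipschitzOnWith two_ne_zero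
    (convex_Icc a b) isCompact_Icc
  rw [tendsto_zero_iff_norm_tendsto_zero]
  refine (tendsto_mul_norm_sum_e_nhdsGT_zero hK hκ hconv).congr' ?_
  filter_upwards [self_mem_nhdsWithin] with ε (hε : 0 < ε)
  have hsum : ∑ i ∈ Finset.Icc ⌈a / ε⌉ ⌊b / ε⌋,
      Complex.exp (2 * Real.pi * Complex.I * (M : ℂ) * (f (ε * i) / ε)) =
      ∑ i ∈ Finset.Icc ⌈a / ε⌉ ⌊b / ε⌋, e (M * f (ε * i) / ε) :=
    Finset.sum_congr rfl fun i _ => by simp only [e]; push_cast; ring_nf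
  have hphase : ∀ i : ℤ, σ * M * f (ε * i) / ε = σ * (M * f (ε * i) / ε) := fun i => by ring
  rw [norm_mul, Complex.norm_real, Real.norm_of_nonneg hε.le, hsum]
  simp only [hphase]
  rw [norm_sum_e_sign_mul _ (fun i : ℤ => M * f (ε * i) / ε) hσ]

theorem stmt11 (a b : ℝ) (hab : a < b) (f : ℝ → ℝ)
    (hf : ContDiffOn ℝ 2 f (Set.Icc a b))
    (hf'' : ∀ t ∈ Set.Icc a b,
      derivWithin (derivWithin f (Set.Icc a b)) (Set.Icc a b) t ≠ 0)
    (hn : ∃ n : ℤ, (n : ℝ) < derivWithin f (Set.Icc a b) a ∧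
      derivWithin f (Set.Icc a b) a < (n : ℝ) + 1 ∧
      (n : ℝ) < derivWithin f (Set.Icc a b) b ∧
      derivWithin f (Set.Icc a b) b < (n : ℝ) + 1)
    (M : ℤ) (hM : M ≠ 0) :
    Tendsto
      (fun ε : ℝ => (ε : ℂ) *
        ∑ i ∈ Finset.Icc ⌈a / ε⌉ ⌊b / ε⌋,
          Complex.exp (2 * Real.pi * Complex.I * (M : ℂ) * (f (ε * i) / ε)))
      (nhdsWithin 0 (Set.Ioi 0)) (nhds 0) :=
  stmt11_general a b hab f hf hf'' M hM
end

section
/- Let φ: ℝ → ℝ be compactly supported, twice continuously differentiable, satisfy Σ_{j∈ℤ} j^m φ(t − j) = t^m for all t ∈ ℝ and m = 0, 1, 2, and satisfy ∫_ℝ φ(t) dt = 1. Define ψ(q, s) := Σ_{j∈ℤ} max(j − q + s, 0) · φ''(q − j). Then ∫_ℝ ∫_0^1 ψ(q, v) dq dv = 1. -/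
open MeasureTheory

/-! For fixed `v`, `ψ(·, v)` is the `ℤ`-periodization of `f_v(t) = max(v - t, 0) φ''(t)`, so its
integral over one period is `∫ f_v`, which equals `φ(v)` by Taylor's formula with integral
remainder (`φ` has compact support, so there are no boundary terms at `-∞`). Integrating in `v`
then gives `∫ φ = 1`. -/

open Set Filter Topology Pointwise

theorem HasCompactSupport.exists_finset_comp_sub_int_eq_zero {M : Type*} [Zero M] {f : ℝ → M}
    (hf : HasCompactSupport f) :
    ∃ S : Finset ℤ, ∀ j ∉ S, ∀ q ∈ Icc (0 : ℝ) 1, f (q - j) = 0 := by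
  have hK : IsCompact (Icc (0 : ℝ) 1 - tsupport f) := by
    simpa only [sub_eq_add_neg] using isCompact_Icc.add hf.isCompact.neg
  have hfin := Filter.mem_cofinite.1 (Int.tendsto_coe_cofinite hK.compl_mem_cocompact)
  refine ⟨hfin.toFinset, fun j hj q hq => image_eq_zero_of_notMem_tsupport fun hqj => ?_⟩
  exact hj (hfin.mem_toFinset.2 fun hjK => hjK ⟨q, hq, q - j, hqj, sub_sub_cancel q j⟩)

theorem intervalIntegral_tsum_comp_sub_int {E : Type*} [NormedAddCommGroup E] [NormedSpace ℝ E]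
    [CompleteSpace E] {f : ℝ → E} (hf : Continuous f) (hfc : HasCompactSupport f) :
    ∫ q in (0 : ℝ)..1, ∑' j : ℤ, f (q - j) = ∫ t, f t := by
  obtain ⟨S, hS⟩ := hfc.exists_finset_comp_sub_int_eq_zero
  have hsum : HasSum (fun j : ℤ => ∫ q in (0 : ℝ)..1, f (q - j)) (∫ t, f t) := by
    have := ((Equiv.neg ℤ).hasSum_iff.2
      (hf.integrable_of_hasCompactSupport hfc).hasSum_intervalIntegral_comp_add_int)
    simpa [Function.comp_def, sub_eq_add_neg] using this
  calc ∫ q in (0 : ℝ)..1, ∑' j : ℤ, f (q - j)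
      = ∫ q in (0 : ℝ)..1, ∑ j ∈ S, f (q - j) := by
        refine intervalIntegral.integral_congr fun q hq => tsum_eq_sum fun j hj => hS j hj q ?_
        rwa [uIcc_of_le zero_le_one] at hq
    _ = ∑ j ∈ S, ∫ q in (0 : ℝ)..1, f (q - j) := intervalIntegral.integral_finsetSum fun j _ =>
        (hf.comp (continuous_sub_right _)).intervalIntegrable _ _
    _ = ∑' j : ℤ, ∫ q in (0 : ℝ)..1, f (q - j) := by
        refine (tsum_eq_sum fun j hj => ?_).symm
        refine (intervalIntegral.integral_congr fun q hq => ?_).trans intervalIntegral.integral_zero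
        rw [uIcc_of_le zero_le_one] at hq
        exact hS j hj q hq
    _ = ∫ t, f t := hsum.tsum_eq

theorem integral_max_sub_mul_deriv_deriv {φ : ℝ → ℝ} (hφ : ContDiff ℝ 2 φ)
    (hφc : HasCompactSupport φ) (v : ℝ) :
    ∫ t, max (v - t) 0 * deriv (deriv φ) t = φ v := by
  have hφ' : ContDiff ℝ 1 (deriv φ) := hφ.deriv'
  have hφ'' : Continuous (deriv (deriv φ)) := hφ'.continuous_deriv le_rfl
  set F : ℝ → ℝ := fun t => (v - t) * deriv φ t + φ t
  have hF : ∀ t, HasDerivAt F ((v - t) * deriv (deriv φ) t) t := fun t => by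
    have := (((hasDerivAt_id t).const_sub v).mul
      (hφ'.differentiable one_ne_zero t).hasDerivAt).add
      ((hφ.differentiable (by norm_num) t).hasDerivAt)
    exact this.congr_deriv (by simp only [id]; ring)
  have hFc : HasCompactSupport F := (hφc.deriv.mul_left).add hφc
  have hint : IntegrableOn (fun t => (v - t) * deriv (deriv φ) t) (Iic v) :=
    ((continuous_const.sub continuous_id).mul hφ'').integrable_of_hasCompactSupport
      hφc.deriv.deriv.mul_left |>.integrableOn
  calc ∫ t, max (v - t) 0 * deriv (deriv φ) t
      = ∫ t in Iic v, max (v - t) 0 * deriv (deriv φ) t := by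
        refine (setIntegral_eq_integral_of_forall_compl_eq_zero fun t ht => ?_).symm
        rw [max_eq_right (sub_nonpos.2 (not_le.1 ht).le), zero_mul]
    _ = ∫ t in Iic v, (v - t) * deriv (deriv φ) t := by
        refine setIntegral_congr_fun measurableSet_Iic fun t ht => ?_
        rw [max_eq_left (sub_nonneg.2 ht)]
    _ = F v - 0 := integral_Iic_of_hasDerivAt_of_tendsto' (fun t _ => hF t) hint
        (hFc.is_zero_at_infty.mono_left atBot_le_cocompact)
    _ = φ v := by simp [F]

theorem psi_eq_tsum (φ : ℝ → ℝ) (q v : ℝ) :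
    psi φ q v = ∑' j : ℤ, max (v - (q - j)) 0 * deriv (deriv φ) (q - j) := by
  simp only [psi, sub_sub_eq_add_sub, add_comm v, sub_add_eq_add_sub]

theorem stmt15_general (φ : ℝ → ℝ)
    (hsupp : HasCompactSupport φ)
    (hsmooth : ContDiff ℝ 2 φ)
    (hA5 : ∫ t : ℝ, φ t = 1) :
    ∫ v : ℝ, ∫ q in (0:ℝ)..1, psi φ q v = 1 := by
  have hφ'' : Continuous (deriv (deriv φ)) := hsmooth.deriv'.continuous_deriv le_rfl
  have hinner : ∀ v, ∫ q in (0:ℝ)..1, psi φ q v = φ v := fun v => by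
    simp_rw [psi_eq_tsum]
    rw [intervalIntegral_tsum_comp_sub_int (f := fun t => max (v - t) 0 * deriv (deriv φ) t)
      (by fun_prop) hsupp.deriv.deriv.mul_left]
    exact integral_max_sub_mul_deriv_deriv hsmooth hsupp v
  simp_rw [hinner, hA5]

theorem stmt15 (φ : ℝ → ℝ)
    (hsupp : HasCompactSupport φ)
    (hsmooth : ContDiff ℝ 2 φ)
    (hA1 : ∀ m : ℕ, m ≤ 2 → ∀ t : ℝ,
      ∑' j : ℤ, (j : ℝ) ^ m * φ (t - (j : ℝ)) = t ^ m)
    (hA5 : ∫ t : ℝ, φ t = 1) :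
    ∫ v : ℝ, ∫ q in (0:ℝ)..1, psi φ q v = 1 :=
  stmt15_general φ hsupp hsmooth hA5
end
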